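/- arXiv:2008.08037 — 7 statements merged into one kernel-verified Lean document; each statement's English description precedes it below -/
import Mathlib

section
/- Let X be a finite probability space with measure P, and let μ: X → [0,1] be a fixed target function. Consider the projected gradient descent iteration on predictors μ̄^t: X → [0,1]: given arbitrary μ̄^1, and at each step t a set S^t ⊆ X and sign λ^t ∈ {-1,1}, define μ̄^{t+1}(x) = clamp_{[0,1]}(μ̄^t(x) - η λ^t) for x ∈ S^t and μ̄^{t+1}(x) = μ̄^t(x) otherwise. Then for any T, ∑_{t=1}^T λ^t · P(S^t) · (μ̄^t(S^t) - μ(S^t)) ≤ 1/(2η) + (η/2)·∑_{t=1}^T P(S^t), where for any predictor f, f(S) denotes E_P[f(x) | x ∈ S]. -/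
open Finset

lemma clamp_sq_le (z m : ℝ) (h0 : 0 ≤ m) (h1 : m ≤ 1) :
    (min (max z 0) 1 - m)^2 ≤ (z - m)^2 := by
  rcases le_total z 0 with h|h
  · rw [max_eq_right h, min_eq_left zero_le_one]
    nlinarith
  · rw [max_eq_left h]
    rcases le_total z 1 with h'|h'
    · rw [min_eq_left h']
    · rw [min_eq_right h']
      nlinarith

/-- Regret bound for projected gradient descent on a finite probability space:
`∑_{t<T} λ_t P(S_t) (μ̄_t(S_t) - μ(S_t)) ≤ 1/(2η) + (η/2) ∑_{t<T} P(S_t)`,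
where `f(S) = E_P[f | x ∈ S]` and updates clamp `μ̄_t - η λ_t` to `[0,1]` on `S_t`. -/
theorem pgd_regret {X : Type*} [Fintype X] [DecidableEq X]
    (p : X → ℝ) (hp : ∀ x, 0 ≤ p x) (hp1 : ∑ x, p x = 1)
    (μ : X → ℝ) (hμ : ∀ x, μ x ∈ Set.Icc (0:ℝ) 1)
    (η : ℝ) (hη : 0 < η)
    (S : ℕ → Finset X) (lam : ℕ → ℝ) (hlam : ∀ t, lam t = 1 ∨ lam t = -1)
    (hSpos : ∀ t, 0 < ∑ x ∈ S t, p x)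
    (μbar : ℕ → X → ℝ) (hinit : ∀ x, μbar 0 x ∈ Set.Icc (0:ℝ) 1)
    (hupd : ∀ t x, μbar (t + 1) x =
      if x ∈ S t then min (max (μbar t x - η * lam t) 0) 1 else μbar t x)
    (T : ℕ) :
    ∑ t ∈ range T, lam t * (∑ x ∈ S t, p x) *
        ((∑ x ∈ S t, p x * μbar t x) / (∑ x ∈ S t, p x) -
          (∑ x ∈ S t, p x * μ x) / (∑ x ∈ S t, p x)) ≤
      1 / (2 * η) + η / 2 * ∑ t ∈ range T, (∑ x ∈ S t, p x) := by
  set D : ℕ → ℝ := fun t => ∑ x, p x * (μbar t x - μ x)^2 with hD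
  have step : ∀ t, 2 * η * (lam t * ∑ x ∈ S t, p x * (μbar t x - μ x)) ≤
      D t - D (t + 1) + η^2 * ∑ x ∈ S t, p x := by
    intro t
    have hstep : D (t + 1) ≤ ∑ x, (p x * (μbar t x - μ x)^2 -
        (if x ∈ S t then p x * (2 * η * lam t * (μbar t x - μ x) - η^2) else 0)) := by
      apply Finset.sum_le_sum
      intro x _
      rw [hupd t x]
      by_cases hx : x ∈ S t
      · simp only [hx, if_true]
        have h1 := clamp_sq_le (μbar t x - η * lam t) (μ x) (hμ x).1 (hμ x).2
        have hl2 : (lam t)^2 = 1 := by rcases hlam t with h|h <;> rw [h] <;> norm_num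
        have hexp2 : (μbar t x - η * lam t - μ x)^2 =
            (μbar t x - μ x)^2 - (2 * η * lam t * (μbar t x - μ x) - η^2) := by
          linear_combination η^2 * hl2
        rw [hexp2] at h1
        have := mul_le_mul_of_nonneg_left h1 (hp x)
        linarith
      · simp [hx]
    have hsplit : ∑ x, (p x * (μbar t x - μ x)^2 -
        (if x ∈ S t then p x * (2 * η * lam t * (μbar t x - μ x) - η^2) else 0)) =
        D t - ∑ x ∈ S t, p x * (2 * η * lam t * (μbar t x - μ x) - η^2) := by
      rw [Finset.sum_sub_distrib, Finset.sum_ite_mem, Finset.univ_inter]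
    rw [hsplit] at hstep
    have hexp : ∑ x ∈ S t, p x * (2 * η * lam t * (μbar t x - μ x) - η^2) =
        2 * η * (lam t * ∑ x ∈ S t, p x * (μbar t x - μ x)) - η^2 * ∑ x ∈ S t, p x := by
      rw [Finset.mul_sum, Finset.mul_sum, Finset.mul_sum, ← Finset.sum_sub_distrib]
      apply Finset.sum_congr rfl
      intro x _
      ring
    rw [hexp] at hstep
    linarith
  have hsum : 2 * η * ∑ t ∈ range T, (lam t * ∑ x ∈ S t, p x * (μbar t x - μ x)) ≤
      D 0 - D T + η^2 * ∑ t ∈ range T, (∑ x ∈ S t, p x) := by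
    rw [Finset.mul_sum, Finset.mul_sum]
    have h1 : ∑ t ∈ range T, (D t - D (t + 1)) = D 0 - D T := by
      rw [← Finset.sum_range_sub' D T]
    calc ∑ t ∈ range T, 2 * η * (lam t * ∑ x ∈ S t, p x * (μbar t x - μ x))
        ≤ ∑ t ∈ range T, (D t - D (t + 1) + η^2 * ∑ x ∈ S t, p x) :=
          Finset.sum_le_sum fun t _ => step t
      _ = D 0 - D T + ∑ t ∈ range T, η^2 * ∑ x ∈ S t, p x := by
          rw [Finset.sum_add_distrib, h1]
  have hD0 : D 0 ≤ 1 := by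
    rw [hD, ← hp1]
    apply Finset.sum_le_sum
    intro x _
    have h1 := (hinit x).1; have h2 := (hinit x).2
    have h3 := (hμ x).1; have h4 := (hμ x).2
    have hsq : (μbar 0 x - μ x)^2 ≤ 1 := by nlinarith
    nlinarith [mul_le_mul_of_nonneg_left hsq (hp x)]
  have hDT : 0 ≤ D T := Finset.sum_nonneg fun x _ => mul_nonneg (hp x) (sq_nonneg _)
  -- rewrite LHS
  have hrw : ∀ t, lam t * (∑ x ∈ S t, p x) *
      ((∑ x ∈ S t, p x * μbar t x) / (∑ x ∈ S t, p x) -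
        (∑ x ∈ S t, p x * μ x) / (∑ x ∈ S t, p x)) =
      lam t * ∑ x ∈ S t, p x * (μbar t x - μ x) := by
    intro t
    have hP := (hSpos t).ne'
    rw [div_sub_div_same, mul_assoc, mul_div_cancel₀ _ hP]
    congr 1
    rw [← Finset.sum_sub_distrib]
    apply Finset.sum_congr rfl
    intro x _
    ring
  rw [Finset.sum_congr rfl fun t _ => hrw t]
  have h2η : (0:ℝ) < 2 * η := by linarith
  rw [← sub_nonneg]
  have key : 2 * η * ∑ t ∈ range T, (lam t * ∑ x ∈ S t, p x * (μbar t x - μ x)) ≤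
      1 + η^2 * ∑ t ∈ range T, (∑ x ∈ S t, p x) := by linarith
  have heq : 1 / (2 * η) + η / 2 * ∑ t ∈ range T, (∑ x ∈ S t, p x) -
      ∑ t ∈ range T, (lam t * ∑ x ∈ S t, p x * (μbar t x - μ x)) =
      (1 + η^2 * ∑ t ∈ range T, (∑ x ∈ S t, p x) -
        2 * η * ∑ t ∈ range T, (lam t * ∑ x ∈ S t, p x * (μbar t x - μ x))) / (2 * η) := by
    field_simp
  rw [heq]
  apply div_nonneg _ h2η.le
  linarith
end

section
/- Let X be a finite probability space with measure P, μ: X → [0,1] a target, and run the projected gradient descent iteration (μ̄^{t+1}(x) = clamp_{[0,1]}(μ̄^t(x) - η λ^t) on S^t, unchanged elsewhere) for T = 1/α² - 1 rounds with η = α = 1/√(T+1). Suppose that at every round t ∈ [T], the chosen set S^t and sign λ^t satisfy λ^t·(μ̄^t(S^t) - μ(S^t)) ≥ α / P(S^t). Then the final predictor μ̄^{T+1} satisfies, for every subset S ⊆ X with positive measure, |μ̄^{T+1}(S) - μ(S)| ≤ α / P(S). -/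
open Finset

lemma clamp_sq_le_aux (a b : ℝ) (ha0 : 0 ≤ a) (ha1 : a ≤ 1) :
    (min (max b 0) 1 - a)^2 ≤ (b - a)^2 := by
  rcases le_total b 0 with hb | hb
  · rw [max_eq_right hb, min_eq_left (by norm_num : (0:ℝ) ≤ 1)]
    nlinarith
  · rcases le_total b 1 with hb1 | hb1
    · rw [max_eq_left hb, min_eq_left hb1]
    · rw [max_eq_left hb, min_eq_right hb1]
      nlinarith

lemma step_bound_aux {X : Type*} [Fintype X] [DecidableEq X]
    (p : X → ℝ) (hp : ∀ x, 0 ≤ p x)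
    (μ : X → ℝ) (hμ : ∀ x, μ x ∈ Set.Icc (0:ℝ) 1)
    (α : ℝ) (g : X → ℝ) (Sf : Finset X) (l : ℝ) (hl : l = 1 ∨ l = -1) :
    ∑ x, p x * ((if x ∈ Sf then min (max (g x - α * l) 0) 1 else g x) - μ x)^2 ≤
      ∑ x, p x * (g x - μ x)^2
        - 2 * α * l * (∑ x ∈ Sf, p x * (g x - μ x))
        + α^2 * ∑ x ∈ Sf, p x := by
  have hl2 : l^2 = 1 := by rcases hl with h | h <;> simp [h]
  have key : ∀ x, p x * ((if x ∈ Sf then min (max (g x - α * l) 0) 1 else g x) - μ x)^2 ≤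
      p x * (g x - μ x)^2 - (if x ∈ Sf then 2*α*l*(p x * (g x - μ x)) - α^2 * p x else 0) := by
    intro x
    by_cases hx : x ∈ Sf
    · simp only [hx, if_true]
      have h1 := clamp_sq_le_aux (μ x) (g x - α * l) (hμ x).1 (hμ x).2
      have h2 : (g x - α * l - μ x)^2 = (g x - μ x)^2 - 2*α*l*(g x - μ x) + α^2 := by
        have h3 : (g x - α * l - μ x)^2
            = (g x - μ x)^2 - 2*α*l*(g x - μ x) + α^2 * l^2 := by ring
        rw [h3, hl2]; ring
      nlinarith [hp x]
    · simp [hx]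
  calc ∑ x, p x * ((if x ∈ Sf then min (max (g x - α * l) 0) 1 else g x) - μ x)^2
      ≤ ∑ x, (p x * (g x - μ x)^2
          - (if x ∈ Sf then 2*α*l*(p x * (g x - μ x)) - α^2 * p x else 0)) :=
        Finset.sum_le_sum (fun x _ => key x)
    _ = ∑ x, p x * (g x - μ x)^2
          - ∑ x ∈ Sf, (2*α*l*(p x * (g x - μ x)) - α^2 * p x) := by
        rw [Finset.sum_sub_distrib, Finset.sum_ite_mem, Finset.univ_inter]
    _ = _ := by
        rw [Finset.sum_sub_distrib, ← Finset.mul_sum, ← Finset.mul_sum]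
        ring

/-- If projected gradient descent is run for `T = 1/α² - 1` rounds with
`η = α = 1/√(T+1)`, and each round's set `S_t` and sign `λ_t` witness an
`α`-consistency violation (`λ_t (μ̄_t(S_t) - μ(S_t)) ≥ α / P(S_t)`), then the final
predictor `μ̄_T` satisfies `|μ̄_T(S) - μ(S)| ≤ α / P(S)` for every positive-measure
set `S`. -/
theorem pgd_mean_consistency {X : Type*} [Fintype X] [DecidableEq X]
    (p : X → ℝ) (hp : ∀ x, 0 ≤ p x) (hp1 : ∑ x, p x = 1)
    (μ : X → ℝ) (hμ : ∀ x, μ x ∈ Set.Icc (0:ℝ) 1)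
    (T : ℕ) (α : ℝ) (hα : α = 1 / Real.sqrt (T + 1))
    (S : ℕ → Finset X) (lam : ℕ → ℝ) (hlam : ∀ t, lam t = 1 ∨ lam t = -1)
    (hSpos : ∀ t, 0 < ∑ x ∈ S t, p x)
    (μbar : ℕ → X → ℝ) (hinit : ∀ x, μbar 0 x ∈ Set.Icc (0:ℝ) 1)
    (hupd : ∀ t x, μbar (t + 1) x =
      if x ∈ S t then min (max (μbar t x - α * lam t) 0) 1 else μbar t x)
    (hviol : ∀ t < T, α / (∑ x ∈ S t, p x) ≤
      lam t * ((∑ x ∈ S t, p x * μbar t x) / (∑ x ∈ S t, p x) -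
        (∑ x ∈ S t, p x * μ x) / (∑ x ∈ S t, p x))) :
    ∀ S' : Finset X, 0 < ∑ x ∈ S', p x →
      |(∑ x ∈ S', p x * μbar T x) / (∑ x ∈ S', p x) -
        (∑ x ∈ S', p x * μ x) / (∑ x ∈ S', p x)| ≤ α / (∑ x ∈ S', p x) := by
  have hT1 : (0:ℝ) < (T:ℝ) + 1 := by positivity
  have hαpos : 0 < α := by
    rw [hα]; positivity
  have hα2 : α^2 = 1/((T:ℝ)+1) := by
    rw [hα, div_pow, one_pow, Real.sq_sqrt hT1.le]
  -- potential
  set Φ : ℕ → ℝ := fun t => ∑ x, p x * (μbar t x - μ x)^2 with hΦ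
  have hΦnonneg : ∀ t, 0 ≤ Φ t := fun t =>
    Finset.sum_nonneg fun x _ => mul_nonneg (hp x) (sq_nonneg _)
  have hΦ0 : Φ 0 ≤ 1 := by
    rw [hΦ]
    calc ∑ x, p x * (μbar 0 x - μ x)^2 ≤ ∑ x, p x := by
          refine Finset.sum_le_sum fun x _ => ?_
          have h1 := hinit x
          have h2 := hμ x
          have : (μbar 0 x - μ x)^2 ≤ 1 := by
            nlinarith [h1.1, h1.2, h2.1, h2.2]
          nlinarith [hp x]
      _ = 1 := hp1
  have hsub1 : ∀ s : Finset X, ∑ x ∈ s, p x ≤ 1 := by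
    intro s
    rw [← hp1]
    exact Finset.sum_le_sum_of_subset_of_nonneg (Finset.subset_univ s)
      (fun x _ _ => hp x)
  -- decrease for violating steps
  have hdec : ∀ t < T, Φ (t+1) ≤ Φ t - α^2 := by
    intro t ht
    have hP := hSpos t
    have hb := step_bound_aux p hp μ hμ α (μbar t) (S t) (lam t) (hlam t)
    have heq : Φ (t+1) = ∑ x, p x *
        ((if x ∈ S t then min (max (μbar t x - α * lam t) 0) 1 else μbar t x) - μ x)^2 := by
      rw [hΦ]
      exact Finset.sum_congr rfl fun x _ => by rw [hupd t x]
    -- derive α ≤ lam t * (sum difference)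
    have hv := hviol t ht
    have hsum : ∑ x ∈ S t, p x * (μbar t x - μ x)
        = (∑ x ∈ S t, p x * μbar t x) - ∑ x ∈ S t, p x * μ x := by
      rw [← Finset.sum_sub_distrib]
      exact Finset.sum_congr rfl fun x _ => by ring
    have hv2 : α ≤ lam t * (∑ x ∈ S t, p x * (μbar t x - μ x)) := by
      rw [hsum]
      have h3 : lam t * ((∑ x ∈ S t, p x * μbar t x) / (∑ x ∈ S t, p x) -
          (∑ x ∈ S t, p x * μ x) / (∑ x ∈ S t, p x))
          = (lam t * ((∑ x ∈ S t, p x * μbar t x) - ∑ x ∈ S t, p x * μ x))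
            / (∑ x ∈ S t, p x) := by
        field_simp
      rw [h3] at hv
      exact (div_le_div_iff_of_pos_right hP).mp hv
    have hle1 := hsub1 (S t)
    rw [heq, hΦ]
    have h2α : 0 ≤ 2 * α := by linarith
    nlinarith [hb, mul_le_mul_of_nonneg_left hv2 h2α]
  -- Φ T ≤ 1 - T α²
  have hΦT : ∀ t, t ≤ T → Φ t ≤ Φ 0 - t * α^2 := by
    intro t
    induction t with
    | zero => intro _; simp
    | succ n ih =>
      intro hn
      have h1 := hdec n (by omega)
      have h2 := ih (by omega)
      push_cast
      linarith
  have hΦTle : Φ T ≤ α^2 := by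
    have h := hΦT T le_rfl
    have hT' : (T:ℝ) * α^2 + α^2 = 1 := by rw [hα2]; field_simp
    linarith
  -- conclusion
  intro S' hS'
  by_contra hcon
  push_neg at hcon
  set A := ∑ x ∈ S', p x * μbar T x with hA
  set B := ∑ x ∈ S', p x * μ x with hB
  set P := ∑ x ∈ S', p x with hPdef
  set l : ℝ := if 0 ≤ A/P - B/P then 1 else -1 with hldef
  have hl : l = 1 ∨ l = -1 := by
    rw [hldef]; split <;> simp
  have habs : l * (A/P - B/P) = |A/P - B/P| := by
    rw [hldef]
    rcases le_or_gt 0 (A/P - B/P) with h | h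
    · rw [if_pos h, abs_of_nonneg h, one_mul]
    · rw [if_neg (not_le.mpr h), abs_of_neg h]; ring
  have hv2 : α < l * (A - B) := by
    have h1 : α / P < l * (A/P - B/P) := by rw [habs]; exact hcon
    have h3 : l * (A/P - B/P) = (l * (A - B)) / P := by field_simp
    rw [h3] at h1
    exact (div_lt_div_iff_of_pos_right hS').mp h1
  have hsum : ∑ x ∈ S', p x * (μbar T x - μ x) = A - B := by
    rw [hA, hB, ← Finset.sum_sub_distrib]
    exact Finset.sum_congr rfl fun x _ => by ring
  have hb := step_bound_aux p hp μ hμ α (μbar T) S' l hl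
  have hnn : (0:ℝ) ≤ ∑ x, p x *
      ((if x ∈ S' then min (max (μbar T x - α * l) 0) 1 else μbar T x) - μ x)^2 :=
    Finset.sum_nonneg fun x _ => mul_nonneg (hp x) (sq_nonneg _)
  have hle1 := hsub1 S'
  have hΦeq : ∑ x, p x * (μbar T x - μ x)^2 = Φ T := rfl
  rw [hΦeq, hsum] at hb
  have h2α : 0 < 2 * α := by linarith
  nlinarith [mul_lt_mul_of_pos_left hv2 h2α]
end

section
/- Let S be a set of positive measure, let μ̄ be a mean predictor whose values on S all lie in an interval of width 1/m, and suppose |μ̄(S) - μ(S)| ≤ α/P(S), where μ(S) = E[y | x ∈ S] is the true conditional mean. Define the pseudo-moment function m̃_{k,μ̄}(x) = E[(y - μ̄(x))^k | x], and m̃_{k,μ̄}(S) = E[m̃_{k,μ̄}(x) | x ∈ S]. Then |m_k(S) - m̃_{k,μ̄}(S)| ≤ k·(1/m + α/P(S)), where m_k(S) = E[(y - μ(S))^k | x ∈ S] is the true k-th central moment on S. -/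
open Finset

lemma abs_pow_sub_pow_le_aux (a b : ℝ) (ha : |a| ≤ 1) (hb : |b| ≤ 1) (k : ℕ) :
    |a ^ k - b ^ k| ≤ (k : ℝ) * |a - b| := by
  induction k with
  | zero => simp
  | succ n ih =>
    have key : a ^ (n + 1) - b ^ (n + 1) = a * (a ^ n - b ^ n) + b ^ n * (a - b) := by ring
    have h1 : |a * (a ^ n - b ^ n)| ≤ (n : ℝ) * |a - b| := by
      rw [abs_mul]
      calc |a| * |a ^ n - b ^ n| ≤ 1 * ((n : ℝ) * |a - b|) :=
            mul_le_mul ha ih (abs_nonneg _) zero_le_one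
        _ = (n : ℝ) * |a - b| := by ring
    have h2 : |b ^ n * (a - b)| ≤ |a - b| := by
      rw [abs_mul]
      calc |b ^ n| * |a - b| ≤ 1 * |a - b| := by
            apply mul_le_mul_of_nonneg_right _ (abs_nonneg _)
            rw [abs_pow]; exact pow_le_one₀ (abs_nonneg _) hb
        _ = |a - b| := one_mul _
    calc |a ^ (n + 1) - b ^ (n + 1)| ≤ |a * (a ^ n - b ^ n)| + |b ^ n * (a - b)| := by
          rw [key]; exact abs_add_le _ _
      _ ≤ (n : ℝ) * |a - b| + |a - b| := add_le_add h1 h2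
      _ = ((n + 1 : ℕ) : ℝ) * |a - b| := by push_cast; ring

/-- If `μ̄` takes values on `S` in an interval of width `1/m`, and
`|μ̄(S) - μ(S)| ≤ α / P(S)`, then the true `k`-th central moment on `S` and the
pseudo-moment `m̃_{k,μ̄}(S) = E[(y - μ̄(x))^k | x ∈ S]` differ by at most
`k (1/m + α/P(S))`. -/
theorem pseudo_moment_close_to_moment {Ω : Type*} [Fintype Ω]
    (p : Ω → ℝ) (hp : ∀ ω, 0 ≤ p ω) (hp1 : ∑ ω, p ω = 1)
    (y : Ω → ℝ) (hy : ∀ ω, y ω ∈ Set.Icc (0:ℝ) 1)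
    (μbar : Ω → ℝ) (hμbar : ∀ ω, μbar ω ∈ Set.Icc (0:ℝ) 1)
    (S : Finset Ω) (k m : ℕ) (hk : 0 < k) (hm : 0 < m) (α : ℝ) (hα : 0 ≤ α)
    (PS : ℝ) (hPS : PS = ∑ ω ∈ S, p ω) (hPSpos : 0 < PS)
    (μS : ℝ) (hμS : μS = (∑ ω ∈ S, p ω * y ω) / PS)
    (μbarS : ℝ) (hμbarS : μbarS = (∑ ω ∈ S, p ω * μbar ω) / PS)
    (mkS : ℝ) (hmkS : mkS = (∑ ω ∈ S, p ω * (y ω - μS) ^ k) / PS)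
    (mtS : ℝ) (hmtS : mtS = (∑ ω ∈ S, p ω * (y ω - μbar ω) ^ k) / PS)
    (hbucket : ∃ c : ℝ, ∀ ω ∈ S, μbar ω ∈ Set.Icc c (c + 1 / (m : ℝ)))
    (hcons : |μbarS - μS| ≤ α / PS) :
    |mkS - mtS| ≤ (k : ℝ) * (1 / (m : ℝ) + α / PS) := by
  obtain ⟨c, hc⟩ := hbucket
  -- μS ∈ [0,1]
  have hμS01 : μS ∈ Set.Icc (0:ℝ) 1 := by
    constructor
    · rw [hμS]
      apply div_nonneg _ hPSpos.le
      exact Finset.sum_nonneg fun ω _ => mul_nonneg (hp ω) (hy ω).1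
    · rw [hμS, div_le_one hPSpos, hPS]
      apply Finset.sum_le_sum
      intro ω _
      calc p ω * y ω ≤ p ω * 1 := mul_le_mul_of_nonneg_left (hy ω).2 (hp ω)
        _ = p ω := mul_one _
  -- μbarS ∈ [c, c + 1/m]
  have hμbarS_mem : μbarS ∈ Set.Icc c (c + 1 / (m : ℝ)) := by
    constructor
    · rw [hμbarS, le_div_iff₀ hPSpos, hPS, Finset.mul_sum]
      apply Finset.sum_le_sum
      intro ω hω
      rw [mul_comm]
      exact mul_le_mul_of_nonneg_left (hc ω hω).1 (hp ω)
    · rw [hμbarS, div_le_iff₀ hPSpos, hPS, Finset.mul_sum]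
      apply Finset.sum_le_sum
      intro ω hω
      calc p ω * μbar ω ≤ p ω * (c + 1 / (m : ℝ)) :=
            mul_le_mul_of_nonneg_left (hc ω hω).2 (hp ω)
        _ = (c + 1 / (m : ℝ)) * p ω := mul_comm _ _
  -- pointwise bound
  have hpt : ∀ ω ∈ S, |(y ω - μS) ^ k - (y ω - μbar ω) ^ k|
      ≤ (k : ℝ) * (1 / (m : ℝ) + α / PS) := by
    intro ω hω
    have h1 : |y ω - μS| ≤ 1 := by
      rw [abs_le]
      constructor <;> [linarith [(hy ω).1, hμS01.2]; linarith [(hy ω).2, hμS01.1]]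
    have h2 : |y ω - μbar ω| ≤ 1 := by
      rw [abs_le]
      constructor <;>
        [linarith [(hy ω).1, (hμbar ω).2]; linarith [(hy ω).2, (hμbar ω).1]]
    have h3 : |(y ω - μS) - (y ω - μbar ω)| = |μbar ω - μS| := by
      rw [show (y ω - μS) - (y ω - μbar ω) = μbar ω - μS by ring]
    have h4 : |μbar ω - μS| ≤ 1 / (m : ℝ) + α / PS := by
      have hbb : |μbar ω - μbarS| ≤ 1 / (m : ℝ) := by
        rw [abs_le]
        constructor <;> [linarith [(hc ω hω).1, hμbarS_mem.2];
          linarith [(hc ω hω).2, hμbarS_mem.1]]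
      calc |μbar ω - μS| = |(μbar ω - μbarS) + (μbarS - μS)| := by ring_nf
        _ ≤ |μbar ω - μbarS| + |μbarS - μS| := abs_add_le _ _
        _ ≤ 1 / (m : ℝ) + α / PS := add_le_add hbb hcons
    calc |(y ω - μS) ^ k - (y ω - μbar ω) ^ k|
        ≤ (k : ℝ) * |(y ω - μS) - (y ω - μbar ω)| :=
          abs_pow_sub_pow_le_aux _ _ h1 h2 k
      _ = (k : ℝ) * |μbar ω - μS| := by rw [h3]
      _ ≤ (k : ℝ) * (1 / (m : ℝ) + α / PS) :=
          mul_le_mul_of_nonneg_left h4 (Nat.cast_nonneg k)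
  -- combine
  have hdiff : mkS - mtS = (∑ ω ∈ S, p ω * ((y ω - μS) ^ k - (y ω - μbar ω) ^ k)) / PS := by
    rw [hmkS, hmtS, div_sub_div_same, ← Finset.sum_sub_distrib]
    congr 1
    apply Finset.sum_congr rfl
    intro ω _
    ring
  rw [hdiff, abs_div, abs_of_pos hPSpos, div_le_iff₀ hPSpos]
  calc |∑ ω ∈ S, p ω * ((y ω - μS) ^ k - (y ω - μbar ω) ^ k)|
      ≤ ∑ ω ∈ S, |p ω * ((y ω - μS) ^ k - (y ω - μbar ω) ^ k)| :=
        Finset.abs_sum_le_sum_abs _ _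
    _ ≤ ∑ ω ∈ S, p ω * ((k : ℝ) * (1 / (m : ℝ) + α / PS)) := by
        apply Finset.sum_le_sum
        intro ω hω
        rw [abs_mul, abs_of_nonneg (hp ω)]
        exact mul_le_mul_of_nonneg_left (hpt ω hω) (hp ω)
    _ = (∑ ω ∈ S, p ω) * ((k : ℝ) * (1 / (m : ℝ) + α / PS)) := by
        rw [← Finset.sum_mul]
    _ = (k : ℝ) * (1 / (m : ℝ) + α / PS) * PS := by rw [hPS]; ring
end

section
/- Let S be a set of positive measure, and suppose: (i) |μ̄(S) - μ(S)| ≤ α/P(S) (mean consistency), (ii) the values of μ̄ on S lie in an interval of width 1/m, and (iii) |m̄_k(S) - m̃_{k,μ̄}(S)| ≤ β/P(S) (pseudo-moment consistency), where m̃_{k,μ̄}(x) = E[(y-μ̄(x))^k | x]. Then |m̄_k(S) - m_k(S)| ≤ (β + kα)/P(S) + k/m, where m_k(S) = E[(y-μ(S))^k | x∈S]. -/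
open Finset

lemma abs_pow_sub_pow_le' (a b : ℝ) (ha : |a| ≤ 1) (hb : |b| ≤ 1) :
    ∀ k : ℕ, |a ^ k - b ^ k| ≤ (k : ℝ) * |a - b| := by
  intro k
  induction k with
  | zero => simp
  | succ n ih =>
    have h1 : a ^ (n+1) - b ^ (n+1) = a * (a ^ n - b ^ n) + (a - b) * b ^ n := by ring
    have h2 : |a ^ (n+1) - b ^ (n+1)| ≤ |a| * |a ^ n - b ^ n| + |a - b| * |b ^ n| := by
      rw [h1]; exact (abs_add_le _ _).trans (by rw [abs_mul, abs_mul])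
    have h3 : |a| * |a ^ n - b ^ n| ≤ (n : ℝ) * |a - b| := by
      calc |a| * |a ^ n - b ^ n| ≤ 1 * |a ^ n - b ^ n| :=
            mul_le_mul_of_nonneg_right ha (abs_nonneg _)
        _ = |a ^ n - b ^ n| := one_mul _
        _ ≤ (n : ℝ) * |a - b| := ih
    have h4 : |a - b| * |b ^ n| ≤ |a - b| := by
      calc |a - b| * |b ^ n| ≤ |a - b| * 1 := by
            refine mul_le_mul_of_nonneg_left ?_ (abs_nonneg _)
            rw [abs_pow]; exact pow_le_one₀ (abs_nonneg _) hb
        _ = |a - b| := mul_one _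
    push_cast
    linarith

/-- Mean consistency plus pseudo-moment consistency on a set `S` where `μ̄` is nearly
constant (values in an interval of width `1/m`) implies genuine moment consistency:
`|m̄_k(S) - m_k(S)| ≤ (β + kα)/P(S) + k/m`. -/
theorem consistency_implies_moment_consistency {Ω : Type*} [Fintype Ω]
    (p : Ω → ℝ) (hp : ∀ ω, 0 ≤ p ω) (hp1 : ∑ ω, p ω = 1)
    (y : Ω → ℝ) (hy : ∀ ω, y ω ∈ Set.Icc (0:ℝ) 1)
    (μbar : Ω → ℝ) (hμbar : ∀ ω, μbar ω ∈ Set.Icc (0:ℝ) 1)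
    (mbar : Ω → ℝ) (hmbar : ∀ ω, mbar ω ∈ Set.Icc (0:ℝ) 1)
    (S : Finset Ω) (k m : ℕ) (hk : 0 < k) (hm : 0 < m)
    (α β : ℝ) (hα : 0 ≤ α) (hβ : 0 ≤ β)
    (PS : ℝ) (hPS : PS = ∑ ω ∈ S, p ω) (hPSpos : 0 < PS)
    (μS : ℝ) (hμS : μS = (∑ ω ∈ S, p ω * y ω) / PS)
    (μbarS : ℝ) (hμbarS : μbarS = (∑ ω ∈ S, p ω * μbar ω) / PS)
    (mbarS : ℝ) (hmbarS : mbarS = (∑ ω ∈ S, p ω * mbar ω) / PS)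
    (mkS : ℝ) (hmkS : mkS = (∑ ω ∈ S, p ω * (y ω - μS) ^ k) / PS)
    (mtS : ℝ) (hmtS : mtS = (∑ ω ∈ S, p ω * (y ω - μbar ω) ^ k) / PS)
    (hbucket : ∃ c : ℝ, ∀ ω ∈ S, μbar ω ∈ Set.Icc c (c + 1 / (m : ℝ)))
    (hmean : |μbarS - μS| ≤ α / PS)
    (hpseudo : |mbarS - mtS| ≤ β / PS) :
    |mbarS - mkS| ≤ (β + (k : ℝ) * α) / PS + (k : ℝ) / (m : ℝ) := by
  obtain ⟨c, hc⟩ := hbucket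
  have hmR : (0:ℝ) < (m:ℝ) := by exact_mod_cast hm
  -- μbarS lies in [c, c + 1/m]
  have hμbarS_lo : c ≤ μbarS := by
    rw [hμbarS, le_div_iff₀ hPSpos]
    calc c * PS = ∑ ω ∈ S, p ω * c := by rw [hPS, Finset.mul_sum]; exact Finset.sum_congr rfl (fun ω _ => mul_comm _ _)
      _ ≤ ∑ ω ∈ S, p ω * μbar ω :=
        Finset.sum_le_sum (fun ω hω => mul_le_mul_of_nonneg_left (hc ω hω).1 (hp ω))
  have hμbarS_hi : μbarS ≤ c + 1 / (m:ℝ) := by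
    rw [hμbarS, div_le_iff₀ hPSpos]
    calc ∑ ω ∈ S, p ω * μbar ω ≤ ∑ ω ∈ S, p ω * (c + 1/(m:ℝ)) :=
        Finset.sum_le_sum (fun ω hω => mul_le_mul_of_nonneg_left (hc ω hω).2 (hp ω))
      _ = (c + 1/(m:ℝ)) * PS := by rw [hPS, Finset.mul_sum]; exact Finset.sum_congr rfl (fun ω _ => mul_comm _ _)
  -- μS ∈ [0,1]
  have hμS01 : μS ∈ Set.Icc (0:ℝ) 1 := by
    constructor
    · rw [hμS]
      exact div_nonneg (Finset.sum_nonneg fun ω _ => mul_nonneg (hp ω) (hy ω).1) hPSpos.le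
    · rw [hμS, div_le_one hPSpos, hPS]
      exact Finset.sum_le_sum fun ω _ => by
        calc p ω * y ω ≤ p ω * 1 := mul_le_mul_of_nonneg_left (hy ω).2 (hp ω)
          _ = p ω := mul_one _
  -- pointwise bound
  have hpt : ∀ ω ∈ S, |(y ω - μbar ω) ^ k - (y ω - μS) ^ k|
      ≤ (k:ℝ) * (1/(m:ℝ) + α / PS) := by
    intro ω hω
    have h1 : |y ω - μbar ω| ≤ 1 := by
      rw [abs_le]; constructor <;> [nlinarith [(hy ω).1, (hμbar ω).2]; nlinarith [(hy ω).2, (hμbar ω).1]]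
    have h2 : |y ω - μS| ≤ 1 := by
      rw [abs_le]; constructor <;> [nlinarith [(hy ω).1, hμS01.2]; nlinarith [(hy ω).2, hμS01.1]]
    refine (abs_pow_sub_pow_le' _ _ h1 h2 k).trans ?_
    have h3 : |y ω - μbar ω - (y ω - μS)| ≤ 1/(m:ℝ) + α / PS := by
      have hb1 := (hc ω hω).1
      have hb2 := (hc ω hω).2
      have := abs_le.mp hmean
      rw [abs_le]; constructor <;> nlinarith [this.1, this.2, hμbarS_lo, hμbarS_hi]
    exact mul_le_mul_of_nonneg_left h3 (Nat.cast_nonneg k)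
  -- |mtS - mkS| bound
  have hmt_mk : |mtS - mkS| ≤ (k:ℝ) * (1/(m:ℝ) + α / PS) := by
    rw [hmtS, hmkS, div_sub_div_same, abs_div, abs_of_pos hPSpos, div_le_iff₀ hPSpos]
    rw [← Finset.sum_sub_distrib]
    calc |∑ ω ∈ S, (p ω * (y ω - μbar ω) ^ k - p ω * (y ω - μS) ^ k)|
        ≤ ∑ ω ∈ S, |p ω * (y ω - μbar ω) ^ k - p ω * (y ω - μS) ^ k| :=
          Finset.abs_sum_le_sum_abs _ _
      _ ≤ ∑ ω ∈ S, p ω * ((k:ℝ) * (1/(m:ℝ) + α / PS)) := by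
          refine Finset.sum_le_sum fun ω hω => ?_
          rw [← mul_sub, abs_mul, abs_of_nonneg (hp ω)]
          exact mul_le_mul_of_nonneg_left (hpt ω hω) (hp ω)
      _ = (k:ℝ) * (1/(m:ℝ) + α / PS) * PS := by
          rw [← Finset.sum_mul, ← hPS, mul_comm]
  -- combine
  have htri : |mbarS - mkS| ≤ |mbarS - mtS| + |mtS - mkS| := abs_sub_le _ _ _
  have hkα : (k:ℝ) * (1/(m:ℝ) + α / PS) = (k:ℝ)/(m:ℝ) + (k:ℝ) * α / PS := by ring
  have : β / PS + ((k:ℝ)/(m:ℝ) + (k:ℝ) * α / PS) = (β + (k:ℝ) * α) / PS + (k:ℝ)/(m:ℝ) := by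
    field_simp; ring
  linarith [hpseudo, hmt_mk, htri, hkα ▸ hmt_mk]
end

section
/- Let (μ̄, m̄_k) be predictors with k even, and let S be a set with P(S) ≥ γ on which: the values of μ̄ lie in an interval of width 1/m and the values of m̄_k lie in an interval of width 1/m; |μ(S) - μ̄(S)| ≤ α/P(S) + ε; and |m_k(S) - m̄_k(S)| ≤ β/P(S) + ε. Define the interval half-width Δ(x) = α/γ + ε + 1/m + ((m̄_k(x) + ε + 1/m + β/γ)/δ)^{1/k}. Then Pr[ |y - μ̄(x)| ≥ Δ(x) | x ∈ S ] ≤ δ. -/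
open Finset

/-- Marginal prediction intervals from approximately mean-conditioned moment
calibrated predictors: if on a set `S` with `P(S) ≥ γ` the predictors `μ̄, m̄_k`
(values bucketed to width `1/m`) satisfy `|μ(S) - μ̄(S)| ≤ α/P(S) + ε` and
`|m_k(S) - m̄_k(S)| ≤ β/P(S) + ε`, then with
`Δ(x) = α/γ + ε + 1/m + ((m̄_k(x) + ε + 1/m + β/γ)/δ)^{1/k}` we have
`Pr[|y - μ̄(x)| ≥ Δ(x) | x ∈ S] ≤ δ`. -/
theorem approx_calibration_prediction_interval {Ω : Type*} [Fintype Ω]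
    (p : Ω → ℝ) (hp : ∀ ω, 0 ≤ p ω) (hp1 : ∑ ω, p ω = 1)
    (y : Ω → ℝ) (hy : ∀ ω, y ω ∈ Set.Icc (0:ℝ) 1)
    (μbar : Ω → ℝ) (hμbar : ∀ ω, μbar ω ∈ Set.Icc (0:ℝ) 1)
    (mbar : Ω → ℝ) (hmbar : ∀ ω, mbar ω ∈ Set.Icc (0:ℝ) 1)
    (S : Finset Ω) (k m : ℕ) (hk : 0 < k) (hke : Even k) (hm : 0 < m)
    (α β ε γ δ : ℝ) (hα : 0 ≤ α) (hβ : 0 ≤ β) (hε : 0 ≤ ε) (hγ : 0 < γ)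
    (hδ : δ ∈ Set.Ioo (0:ℝ) 1)
    (PS : ℝ) (hPS : PS = ∑ ω ∈ S, p ω) (hPSγ : γ ≤ PS)
    (μS : ℝ) (hμS : μS = (∑ ω ∈ S, p ω * y ω) / PS)
    (μbarS : ℝ) (hμbarS : μbarS = (∑ ω ∈ S, p ω * μbar ω) / PS)
    (mbarS : ℝ) (hmbarS : mbarS = (∑ ω ∈ S, p ω * mbar ω) / PS)
    (mkS : ℝ) (hmkS : mkS = (∑ ω ∈ S, p ω * (y ω - μS) ^ k) / PS)
    (hbucketμ : ∃ c : ℝ, ∀ ω ∈ S, μbar ω ∈ Set.Icc c (c + 1 / (m : ℝ)))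
    (hbucketm : ∃ c : ℝ, ∀ ω ∈ S, mbar ω ∈ Set.Icc c (c + 1 / (m : ℝ)))
    (hmean : |μS - μbarS| ≤ α / PS + ε)
    (hmom : |mkS - mbarS| ≤ β / PS + ε)
    (Δ : Ω → ℝ)
    (hΔ : ∀ ω, Δ ω = α / γ + ε + 1 / (m : ℝ) +
      ((mbar ω + ε + 1 / (m : ℝ) + β / γ) / δ) ^ (1 / (k : ℝ))) :
    (∑ ω ∈ S.filter (fun ω => Δ ω ≤ |y ω - μbar ω|), p ω) / PS ≤ δ := by
  obtain ⟨hδ0, hδ1⟩ := hδ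
  have hPSpos : 0 < PS := lt_of_lt_of_le hγ hPSγ
  have hm' : (0:ℝ) < 1 / (m:ℝ) := by positivity
  have hk0 : (k:ℝ) ≠ 0 := Nat.cast_ne_zero.mpr hk.ne'
  obtain ⟨c, hc⟩ := hbucketμ
  obtain ⟨d, hd⟩ := hbucketm
  set T := S.filter (fun ω => Δ ω ≤ |y ω - μbar ω|) with hT
  have hTS : ∀ ω ∈ T, ω ∈ S := fun ω hω => (Finset.mem_filter.mp hω).1
  -- weighted average bounds
  have hsum_lb : ∀ (f : Ω → ℝ) (a : ℝ), (∀ ω ∈ S, a ≤ f ω) →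
      a ≤ (∑ ω ∈ S, p ω * f ω) / PS := by
    intro f a ha
    rw [le_div_iff₀ hPSpos, hPS, Finset.mul_sum]
    exact Finset.sum_le_sum fun ω hω => by
      rw [mul_comm a (p ω)]; exact mul_le_mul_of_nonneg_left (ha ω hω) (hp ω)
  have hsum_ub : ∀ (f : Ω → ℝ) (a : ℝ), (∀ ω ∈ S, f ω ≤ a) →
      (∑ ω ∈ S, p ω * f ω) / PS ≤ a := by
    intro f a ha
    rw [div_le_iff₀ hPSpos, hPS, Finset.mul_sum]
    exact Finset.sum_le_sum fun ω hω => by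
      rw [mul_comm a (p ω)]; exact mul_le_mul_of_nonneg_left (ha ω hω) (hp ω)
  have hμbarS_lb : c ≤ μbarS := hμbarS ▸ hsum_lb μbar c fun ω h => (hc ω h).1
  have hμbarS_ub : μbarS ≤ c + 1/(m:ℝ) := hμbarS ▸ hsum_ub μbar _ fun ω h => (hc ω h).2
  have hmbarS_ub : mbarS ≤ d + 1/(m:ℝ) := hmbarS ▸ hsum_ub mbar _ fun ω h => (hd ω h).2
  have hαPS : α / PS ≤ α / γ := div_le_div_of_nonneg_left hα hγ hPSγ
  have hβPS : β / PS ≤ β / γ := div_le_div_of_nonneg_left hβ hγ hPSγ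
  -- X ω bounds
  have hmkS0 : 0 ≤ mkS := by
    rw [hmkS]
    apply div_nonneg _ hPSpos.le
    exact Finset.sum_nonneg fun ω _ => mul_nonneg (hp ω) (hke.pow_nonneg _)
  have hXmkS : ∀ ω ∈ S, mkS ≤ mbar ω + ε + 1/(m:ℝ) + β/γ := by
    intro ω hω
    have h1 : mkS ≤ mbarS + (β / PS + ε) := by
      have := (abs_le.mp hmom).2; linarith
    have h2 : mbarS ≤ mbar ω + 1/(m:ℝ) := le_trans hmbarS_ub (by linarith [(hd ω hω).1])
    linarith
  have hX0 : ∀ ω, 0 ≤ mbar ω + ε + 1/(m:ℝ) + β/γ := by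
    intro ω
    have := (hmbar ω).1
    have : (0:ℝ) ≤ β / γ := by positivity
    linarith [(hmbar ω).1, hm'.le]
  -- pointwise Chebyshev bound on T
  have hkey : ∀ ω ∈ T, mbar ω + ε + 1/(m:ℝ) + β/γ ≤ δ * (y ω - μS) ^ k := by
    intro ω hω
    have hωS := hTS ω hω
    have hΔω := (Finset.mem_filter.mp hω).2
    set X := mbar ω + ε + 1/(m:ℝ) + β/γ with hX
    have hXnn : 0 ≤ X := hX0 ω
    have hXd : 0 ≤ X / δ := div_nonneg hXnn hδ0.le
    set B := (X / δ) ^ (1 / (k:ℝ)) with hB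
    have hBnn : 0 ≤ B := Real.rpow_nonneg hXd _
    have hBk : B ^ k = X / δ := by
      rw [hB, ← Real.rpow_natCast ((X/δ) ^ (1/(k:ℝ))) k, ← Real.rpow_mul hXd,
        one_div_mul_cancel hk0, Real.rpow_one]
    -- |μbar ω - μS| ≤ α/γ + ε + 1/m
    have hμclose : |μbar ω - μS| ≤ α/γ + ε + 1/(m:ℝ) := by
      have h1 : |μS - μbarS| ≤ α/γ + ε := le_trans hmean (by linarith)
      have h2 : |μbar ω - μbarS| ≤ 1/(m:ℝ) := by
        rw [abs_le]; constructor <;> [linarith [(hc ω hωS).1]; linarith [(hc ω hωS).2]]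
      calc |μbar ω - μS| ≤ |μbar ω - μbarS| + |μbarS - μS| := abs_sub_le _ _ _
        _ ≤ 1/(m:ℝ) + (α/γ + ε) := by
            rw [abs_sub_comm μbarS μS]; exact add_le_add h2 h1
        _ = α/γ + ε + 1/(m:ℝ) := by ring
    have hyB : B ≤ |y ω - μS| := by
      have := hΔ ω
      have h3 : |y ω - μbar ω| ≤ |y ω - μS| + |μbar ω - μS| := by
        calc |y ω - μbar ω| ≤ |y ω - μS| + |μS - μbar ω| := abs_sub_le _ _ _
          _ = |y ω - μS| + |μbar ω - μS| := by rw [abs_sub_comm μS]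
      rw [hΔ ω] at hΔω
      linarith
    have hpow : B ^ k ≤ |y ω - μS| ^ k := pow_le_pow_left₀ hBnn hyB k
    rw [hBk] at hpow
    have habs : |y ω - μS| ^ k = (y ω - μS) ^ k := hke.pow_abs _
    rw [habs] at hpow
    rw [div_le_iff₀ hδ0] at hpow
    linarith [hpow]
  -- sum up
  rw [div_le_iff₀ hPSpos]
  have hsumT : mkS * (∑ ω ∈ T, p ω) ≤ δ * (mkS * PS) := by
    have h1 : mkS * PS = ∑ ω ∈ S, p ω * (y ω - μS) ^ k := by
      rw [hmkS, div_mul_cancel₀ _ hPSpos.ne']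
    have h2 : ∑ ω ∈ T, p ω * (y ω - μS) ^ k ≤ ∑ ω ∈ S, p ω * (y ω - μS) ^ k :=
      Finset.sum_le_sum_of_subset_of_nonneg (Finset.filter_subset _ _)
        (fun ω _ _ => mul_nonneg (hp ω) (hke.pow_nonneg _))
    have h3 : ∑ ω ∈ T, p ω * mkS ≤ ∑ ω ∈ T, p ω * (δ * (y ω - μS) ^ k) := by
      apply Finset.sum_le_sum
      intro ω hω
      exact mul_le_mul_of_nonneg_left (le_trans (hXmkS ω (hTS ω hω)) (hkey ω hω)) (hp ω)
    calc mkS * (∑ ω ∈ T, p ω) = ∑ ω ∈ T, p ω * mkS := by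
          rw [Finset.mul_sum]; exact Finset.sum_congr rfl fun ω _ => mul_comm _ _
      _ ≤ ∑ ω ∈ T, p ω * (δ * (y ω - μS) ^ k) := h3
      _ = δ * ∑ ω ∈ T, p ω * (y ω - μS) ^ k := by
          rw [Finset.mul_sum]; exact Finset.sum_congr rfl fun ω _ => by ring
      _ ≤ δ * (mkS * PS) := by rw [h1]; exact mul_le_mul_of_nonneg_left h2 hδ0.le
  rcases eq_or_lt_of_le hmkS0 with hmk0 | hmkpos
  · -- mkS = 0 : every bad point has p ω = 0
    have hzero : ∀ ω ∈ T, p ω = 0 := by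
      intro ω hω
      by_contra hpω
      have hppos : 0 < p ω := lt_of_le_of_ne (hp ω) (Ne.symm hpω)
      have hXpos : 0 < mbar ω + ε + 1/(m:ℝ) + β/γ := by
        have : (0:ℝ) ≤ β / γ := by positivity
        linarith [(hmbar ω).1, hm']
      have h1 : p ω * (mbar ω + ε + 1/(m:ℝ) + β/γ) ≤ ∑ ω ∈ T, p ω * (δ * (y ω - μS) ^ k) := by
        refine le_trans ?_ (Finset.single_le_sum (f := fun ω => p ω * (δ * (y ω - μS) ^ k))
          (fun ω _ => mul_nonneg (hp ω) (mul_nonneg hδ0.le (hke.pow_nonneg _))) hω)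
        exact mul_le_mul_of_nonneg_left (hkey ω hω) (hp ω)
      have h2 : ∑ ω ∈ T, p ω * (δ * (y ω - μS) ^ k) ≤ δ * (mkS * PS) := by
        calc ∑ ω ∈ T, p ω * (δ * (y ω - μS) ^ k)
            = δ * ∑ ω ∈ T, p ω * (y ω - μS) ^ k := by
              rw [Finset.mul_sum]; exact Finset.sum_congr rfl fun ω _ => by ring
          _ ≤ δ * (mkS * PS) := by
              rw [hmkS, div_mul_cancel₀ _ hPSpos.ne']
              exact mul_le_mul_of_nonneg_left
                (Finset.sum_le_sum_of_subset_of_nonneg (Finset.filter_subset _ _)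
                  (fun ω _ _ => mul_nonneg (hp ω) (hke.pow_nonneg _))) hδ0.le
      rw [← hmk0] at h2
      nlinarith
    have : (∑ ω ∈ T, p ω) = 0 := Finset.sum_eq_zero hzero
    rw [this]
    positivity
  · have h := hsumT
    rw [show δ * (mkS * PS) = mkS * (δ * PS) by ring] at h
    exact le_of_mul_le_mul_left h hmkpos
end

section
/- Fix S ⊆ X, functions ℓ̄: X → [0,1] and ℓ: X×[0,1] → [0,1], a sample D of n points with n' > 0 of them in S, and suppose the following closeness conditions hold: |n'/n − P_X(S)| ≤ √(ln(2/δ)/(2n)), |(1/n')∑_{b} ℓ̄(x_b) − ℓ̄(S)| ≤ √(ln(2/δ)/(2n')), and |(1/n')∑_b ℓ(x_b,y_b) − ℓ(S)| ≤ √(ln(2/δ)/(2n')), where sums range over the n' sample points in S. If moreover |(1/n')∑_b ℓ̄(x_b) − (1/n')∑_b ℓ(x_b,y_b)| − 2√(ln(2/δ)/(2n')) ≥ α / (n'/n − √(ln(2/δ)/(2n))), with the denominator positive, then |ℓ̄(S) − ℓ(S)| ≥ α/P_X(S) and sign((1/n')∑_b ℓ̄(x_b) − (1/n')∑_b ℓ(x_b,y_b))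 = sign(ℓ̄(S) − ℓ(S)). -/
open Finset

/-- If the empirical sample is close to the distribution on `S` (Chernoff-style
closeness conditions) and the empirical consistency check fires
(`|emp(ℓ̄) - emp(ℓ)| - 2√(ln(2/δ)/(2n')) ≥ α/(n'/n - √(ln(2/δ)/(2n)))`
with positive denominator), then there is a true `α`-consistency violation:
`|ℓ̄(S) - ℓ(S)| ≥ α/P_X(S)` with matching sign. -/
theorem auditor_sound {𝒳 : Type*} (S : Set 𝒳) [DecidablePred (· ∈ S)]
    (n : ℕ) (hn : 0 < n)
    (xs : Fin n → 𝒳) (ys : Fin n → ℝ)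
    (lbar : 𝒳 → ℝ) (hlbar : ∀ x, lbar x ∈ Set.Icc (0:ℝ) 1)
    (l : 𝒳 → ℝ → ℝ) (hl : ∀ x y, l x y ∈ Set.Icc (0:ℝ) 1)
    (lbarS lS PS : ℝ) (hPSpos : 0 < PS) (hPS1 : PS ≤ 1)
    (hlbarS : lbarS ∈ Set.Icc (0:ℝ) 1) (hlS : lS ∈ Set.Icc (0:ℝ) 1)
    (α δ : ℝ) (hα : 0 < α) (hδ : δ ∈ Set.Ioo (0:ℝ) 1)
    (idx : Finset (Fin n)) (hidx : idx = Finset.univ.filter (fun b => xs b ∈ S))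
    (n' : ℕ) (hn'def : n' = idx.card) (hn'pos : 0 < n')
    (h1 : |(n' : ℝ) / n - PS| ≤ Real.sqrt (Real.log (2 / δ) / (2 * n)))
    (h2 : |(1 / (n' : ℝ)) * ∑ b ∈ idx, lbar (xs b) - lbarS| ≤
      Real.sqrt (Real.log (2 / δ) / (2 * n')))
    (h3 : |(1 / (n' : ℝ)) * ∑ b ∈ idx, l (xs b) (ys b) - lS| ≤
      Real.sqrt (Real.log (2 / δ) / (2 * n')))
    (hden : 0 < (n' : ℝ) / n - Real.sqrt (Real.log (2 / δ) / (2 * n)))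
    (hcheck : α / ((n' : ℝ) / n - Real.sqrt (Real.log (2 / δ) / (2 * n))) ≤
      |(1 / (n' : ℝ)) * ∑ b ∈ idx, lbar (xs b) -
        (1 / (n' : ℝ)) * ∑ b ∈ idx, l (xs b) (ys b)| -
        2 * Real.sqrt (Real.log (2 / δ) / (2 * n'))) :
    α / PS ≤ |lbarS - lS| ∧
      Real.sign ((1 / (n' : ℝ)) * ∑ b ∈ idx, lbar (xs b) -
          (1 / (n' : ℝ)) * ∑ b ∈ idx, l (xs b) (ys b)) =
        Real.sign (lbarS - lS) := by
  set A := (1 / (n' : ℝ)) * ∑ b ∈ idx, lbar (xs b) with hA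
  set B := (1 / (n' : ℝ)) * ∑ b ∈ idx, l (xs b) (ys b) with hB
  set e' := Real.sqrt (Real.log (2 / δ) / (2 * n')) with he'
  set e := Real.sqrt (Real.log (2 / δ) / (2 * n)) with he
  have he'0 : 0 ≤ e' := Real.sqrt_nonneg _
  have hdpos : 0 < α / ((n' : ℝ) / n - e) := div_pos hα hden
  have hABpos : 0 < |A - B| - 2 * e' := lt_of_lt_of_le hdpos hcheck
  have h2' := abs_le.mp h2
  have h3' := abs_le.mp h3
  have h1' := abs_le.mp h1
  have hle : (n' : ℝ) / n - e ≤ PS := by linarith [h1'.1, h1'.2]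
  have hstep : α / PS ≤ α / ((n' : ℝ) / n - e) :=
    div_le_div_of_nonneg_left hα.le hden hle
  have hkey : |A - B| - 2 * e' ≤ |lbarS - lS| := by
    rcases abs_cases (A - B) with ⟨hab, _⟩ | ⟨hab, _⟩ <;>
      rcases abs_cases (lbarS - lS) with ⟨hls, _⟩ | ⟨hls, _⟩ <;> linarith
  refine ⟨le_trans hstep (le_trans hcheck hkey), ?_⟩
  rcases abs_cases (A - B) with ⟨hab, habs⟩ | ⟨hab, habs⟩
  · have hABgt : 0 < A - B := by linarith
    have hls : 0 < lbarS - lS := by linarith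
    rw [Real.sign_of_pos hABgt, Real.sign_of_pos hls]
  · have hABlt : A - B < 0 := by linarith
    have hls : lbarS - lS < 0 := by linarith
    rw [Real.sign_of_neg hABlt, Real.sign_of_neg hls]
end

section
/- Fix S ⊆ X with P_X(S) ≥ α, and suppose 2√(ln(2/δ)/(2n)) < α. Assume the sample-closeness conditions: |n'/n − P_X(S)| ≤ √(ln(2/δ)/(2n)), |(1/n')∑_b ℓ̄(x_b) − ℓ̄(S)| ≤ √(ln(2/δ)/(2n')), and |(1/n')∑_b ℓ(x_b,y_b) − ℓ(S)| ≤ √(ln(2/δ)/(2n')). Let α' = α + 4√(ln(2/δ)/(2n)) + (α − 2√(ln(2/δ)/(2n)))^{-2}·(2√(ln(2/δ)/(2n))). If |ℓ̄(S) − ℓ(S)| ≥ α'/P_X(S), then the empirical check succeeds: |(1/n')∑_b ℓ̄(x_b) − (1/n')∑_b ℓ(x_b,y_b)| − 2√(ln(2/δ)/(2n')) ≥ α/(n'/n − √(ln(2/δ)/(2n))). -/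
open Finset

set_option maxHeartbeats 1000000

/-- Converse auditor guarantee: if `P_X(S) ≥ α`, `2√(ln(2/δ)/(2n)) < α`, the sample
is close to the distribution on `S`, and the true consistency violation is at least
`α'/P_X(S)` where
`α' = α + 4√(ln(2/δ)/(2n)) + (α - 2√(ln(2/δ)/(2n)))⁻² (2√(ln(2/δ)/(2n)))`,
then the empirical check succeeds. -/
theorem auditor_complete {𝒳 : Type*} (S : Set 𝒳) [DecidablePred (· ∈ S)]
    (n : ℕ) (hn : 0 < n)
    (xs : Fin n → 𝒳) (ys : Fin n → ℝ)
    (lbar : 𝒳 → ℝ) (hlbar : ∀ x, lbar x ∈ Set.Icc (0:ℝ) 1)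
    (l : 𝒳 → ℝ → ℝ) (hl : ∀ x y, l x y ∈ Set.Icc (0:ℝ) 1)
    (lbarS lS PS : ℝ) (hPS1 : PS ≤ 1)
    (hlbarS : lbarS ∈ Set.Icc (0:ℝ) 1) (hlS : lS ∈ Set.Icc (0:ℝ) 1)
    (α δ : ℝ) (hα : 0 < α) (hδ : δ ∈ Set.Ioo (0:ℝ) 1)
    (hPSα : α ≤ PS)
    (hsmall : 2 * Real.sqrt (Real.log (2 / δ) / (2 * n)) < α)
    (idx : Finset (Fin n)) (hidx : idx = Finset.univ.filter (fun b => xs b ∈ S))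
    (n' : ℕ) (hn'def : n' = idx.card) (hn'pos : 0 < n')
    (h1 : |(n' : ℝ) / n - PS| ≤ Real.sqrt (Real.log (2 / δ) / (2 * n)))
    (h2 : |(1 / (n' : ℝ)) * ∑ b ∈ idx, lbar (xs b) - lbarS| ≤
      Real.sqrt (Real.log (2 / δ) / (2 * n')))
    (h3 : |(1 / (n' : ℝ)) * ∑ b ∈ idx, l (xs b) (ys b) - lS| ≤
      Real.sqrt (Real.log (2 / δ) / (2 * n')))
    (α' : ℝ)
    (hα' : α' = α + 4 * Real.sqrt (Real.log (2 / δ) / (2 * n)) +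
      (2 * Real.sqrt (Real.log (2 / δ) / (2 * n))) /
        (α - 2 * Real.sqrt (Real.log (2 / δ) / (2 * n))) ^ 2)
    (hviol : α' / PS ≤ |lbarS - lS|) :
    α / ((n' : ℝ) / n - Real.sqrt (Real.log (2 / δ) / (2 * n))) ≤
      |(1 / (n' : ℝ)) * ∑ b ∈ idx, lbar (xs b) -
        (1 / (n' : ℝ)) * ∑ b ∈ idx, l (xs b) (ys b)| -
        2 * Real.sqrt (Real.log (2 / δ) / (2 * n')) := by

  have hδ0 := hδ.1
  have hδ1 := hδ.2
  have hL : 0 < Real.log (2 / δ) := Real.log_pos ((one_lt_div hδ0).2 (by linarith))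
  have hn0 : (0:ℝ) < n := by exact_mod_cast hn
  have hn'0 : (0:ℝ) < n' := by exact_mod_cast hn'pos
  set ε := Real.sqrt (Real.log (2 / δ) / (2 * n)) with hεdef
  set ε' := Real.sqrt (Real.log (2 / δ) / (2 * n')) with hε'def
  set A := (1 / (n' : ℝ)) * ∑ b ∈ idx, lbar (xs b) with hA
  set B := (1 / (n' : ℝ)) * ∑ b ∈ idx, l (xs b) (ys b) with hB
  set q := (n' : ℝ) / n with hqdef
  have hεpos : 0 < ε := Real.sqrt_pos.2 (by positivity)
  have hε'pos : 0 < ε' := Real.sqrt_pos.2 (by positivity)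
  have hεsq : ε ^ 2 = Real.log (2/δ) / (2*n) := Real.sq_sqrt (by positivity)
  have hε'sq : ε' ^ 2 = Real.log (2/δ) / (2*n') := Real.sq_sqrt (by positivity)
  have hPS0 : 0 < PS := lt_of_lt_of_le hα hPSα
  have hα1 : α ≤ 1 := le_trans hPSα hPS1
  have ht : 0 < α - 2*ε := by linarith
  set t := α - 2*ε with htdef
  have htle : t ≤ PS - 2*ε := by simp only [htdef]; linarith
  have hPSε : 0 < PS - ε := by simp only [htdef] at ht ⊢; linarith
  have hq1 : PS - ε ≤ q := by have := (abs_le.1 h1).1; linarith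
  have hq2 : q ≤ PS + ε := by have := (abs_le.1 h1).2; linarith
  -- key bound on ε'
  have hqe : ε' ^ 2 * q = ε ^ 2 := by
    rw [hεsq, hε'sq, hqdef]
    field_simp
  have hkey2 : ε' ^ 2 * (PS - ε) ≤ ε ^ 2 := by
    nlinarith only [sq_nonneg ε', hq1, hqe]
  set s := Real.sqrt (PS - ε) with hsdef
  set u := Real.sqrt t with hudef
  have hs2 : s ^ 2 = PS - ε := Real.sq_sqrt hPSε.le
  have hu2 : u ^ 2 = t := Real.sq_sqrt ht.le
  have hs0 : 0 ≤ s := Real.sqrt_nonneg _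
  have hu0 : 0 < u := Real.sqrt_pos.2 ht
  have hu1 : u ≤ 1 := Real.sqrt_le_one.2 (by simp only [htdef]; linarith)
  have hus : u ≤ s := Real.sqrt_le_sqrt (by simp only [htdef]; linarith)
  have hkeysq : (ε' * s) ^ 2 ≤ ε ^ 2 := by
    calc (ε' * s) ^ 2 = ε' ^ 2 * (PS - ε) := by rw [mul_pow, hs2]
    _ ≤ ε ^ 2 := hkey2
  have hkey : ε' * s ≤ ε := by
    nlinarith only [hkeysq, mul_nonneg hε'pos.le hs0, hεpos.le]
  have hεu : ε' * u ≤ ε := le_trans (mul_le_mul_of_nonneg_left hus hε'pos.le) hkey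
  -- step a
  have ha : α / (q - ε) ≤ α / (PS - 2*ε) := by
    apply div_le_div_of_nonneg_left hα.le
    · linarith
    · linarith
  have hPS2e : 0 < PS - 2*ε := lt_of_lt_of_le ht htle
  -- step b
  have hb : α / (PS - 2*ε) ≤ α / PS + 2*ε / (PS * t) := by
    rw [← sub_nonneg]
    have heq : α / PS + 2*ε / (PS * t) - α / (PS - 2*ε) =
        (α * t * (PS - 2*ε) + 2*ε*(PS - 2*ε) - α * PS * t) / (PS * t * (PS - 2*ε)) := by
      field_simp [hPS0.ne', ht.ne', hPS2e.ne']
    rw [heq]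
    apply div_nonneg
    · have hnum0 : 0 ≤ PS - 2*ε - α*t := by nlinarith only [htle, ht.le, hα1]
      nlinarith only [mul_nonneg hεpos.le hnum0]
    · exact (mul_pos (mul_pos hPS0 ht) hPS2e).le
  -- main ε' inequality
  have hmain : 2*ε / (PS * t) + 4*ε' ≤ 4*ε / PS + 2*ε / (PS * t^2) := by
    rw [← sub_nonneg]
    have heq : 4*ε / PS + 2*ε / (PS * t^2) - (2*ε / (PS * t) + 4*ε') =
        (4*ε*t^2 + 2*ε - 2*ε*t - 4*ε'*PS*t^2) / (PS * t^2) := by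
      field_simp [hPS0.ne', ht.ne']
      ring
    rw [heq]
    apply div_nonneg _ (by positivity : (0:ℝ) ≤ PS * t^2)
    have h6 : ε' * u^4 * PS ≤ ε' * u^4 := by
      nlinarith only [mul_nonneg hε'pos.le (pow_nonneg hu0.le 4), hPS1]
    have h7 : (ε' * u) * u^3 ≤ ε * u^3 :=
      mul_le_mul_of_nonneg_right hεu (by positivity)
    have h8 : (0:ℝ) ≤ ε * (2 * (u-1)^2 * (2*u^2 + 2*u + 1)) := by positivity
    rw [← hu2]
    nlinarith only [h6, h7, h8]
  have hα'eq : α' / PS = α / PS + 4*ε / PS + 2*ε / (PS * t^2) := by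
    rw [hα']
    field_simp [hPS0.ne', ht.ne']
  -- abs step
  have habs : |lbarS - lS| - 2*ε' ≤ |A - B| := by
    have h4 : lbarS - lS = (lbarS - A) + (A - B) + (B - lS) := by ring
    have h5 : |lbarS - lS| ≤ |lbarS - A| + |A - B| + |B - lS| := by
      rw [h4]
      exact (abs_add_le _ _).trans (add_le_add_left (abs_add_le _ _) _)
    rw [abs_sub_comm lbarS A] at h5
    linarith
  linarith only [ha, hb, hmain, hviol, habs, hα'eq]
end
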